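/- arXiv:2003.09992 — 9 statements merged into one kernel-verified Lean document; each statement's English description precedes it below -/
import Mathlib

section
/- Let f be a polynomial in six variables X_0,…,X_5 over ℂ which is symmetric (invariant under every permutation of the variables) and homogeneous of degree 3. Then there exist a scalar a ∈ ℂ and a polynomial g with f = a·(X_0³+X_1³+X_2³+X_3³+X_4³+X_5³) + (X_0+X_1+X_2+X_3+X_4+X_5)·g. In other words, modulo the ideal generated by the first power sum, every 𝔖_6-invariant cubic form in six variables is a scalar multiple of the third power sum (this expresses that the Segre cubic primal is the unique 𝔖_6-invariant cubic threefold in the hyperplane {z_0+⋯+z_5=0} ⊂ P^5). -/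
/-!
By the fundamental theorem on symmetric polynomials, `f = P(e₁, …, eₙ)`. Since `eₖ` is
homogeneous of degree `k`, the degree-3 part of `P(e₁, …, eₙ)` is a combination of `e₁³`, `e₁e₂`
and `e₃`, so `f ≡ a • e₃` modulo `e₁`. Newton's identity `p₃ = 3e₃ + e₁(p₂ - e₂)` then gives
`f ≡ (a / 3) • p₃` modulo `e₁`.
-/

namespace MvPolynomial

section Homogeneous

variable {σ R : Type*} [CommSemiring R] {s t : MvPolynomial σ R} {m : ℕ}

attribute [local instance] gradedAlgebra

theorem IsHomogeneous.homogeneousComponent_mul_of_le (ht : t.IsHomogeneous m) {k : ℕ}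
    (hk : m ≤ k) : homogeneousComponent k (s * t) = homogeneousComponent (k - m) s * t := by
  simp only [← decomposition.decompose'_apply]
  exact DirectSum.coe_decompose_mul_of_right_mem_of_le (homogeneousSubmodule σ R) ht hk

theorem IsHomogeneous.homogeneousComponent_mul_of_lt (ht : t.IsHomogeneous m) {k : ℕ}
    (hk : k < m) : homogeneousComponent k (s * t) = 0 := by
  simp only [← decomposition.decompose'_apply]
  exact DirectSum.coe_decompose_mul_of_right_mem_of_not_le (homogeneousSubmodule σ R) ht
    (not_le.mpr hk)

theorem isHomogeneous_esymm [Fintype σ] (k : ℕ) : (esymm σ R k).IsHomogeneous k :=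
  IsHomogeneous.sum _ _ _ fun A hA => by
    simpa [(Finset.mem_powersetCard.mp hA).2] using
      IsHomogeneous.prod A (fun i => X i) (fun _ => 1) fun i _ => isHomogeneous_X R i

end Homogeneous

section Cubic

variable {σ R : Type*} [Fintype σ] [CommRing R]

-- Degree 1 is tracked because multiplying it by `e₂` lands in degree 3.
def IsLowDegreeMultipleOfEsymmThree (q : MvPolynomial σ R) : Prop :=
  homogeneousComponent 1 q ∈ Ideal.span {esymm σ R 1} ∧
    ∃ a : R, homogeneousComponent 3 q - C a * esymm σ R 3 ∈ Ideal.span {esymm σ R 1}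

theorem isLowDegreeMultipleOfEsymmThree_C (r : R) :
    IsLowDegreeMultipleOfEsymmThree (C r : MvPolynomial σ R) := by
  refine ⟨?_, 0, ?_⟩ <;> simp [homogeneousComponent_of_mem (isHomogeneous_C σ r)]

namespace IsLowDegreeMultipleOfEsymmThree

variable {q q' : MvPolynomial σ R}

theorem add (hq : IsLowDegreeMultipleOfEsymmThree q)
    (hq' : IsLowDegreeMultipleOfEsymmThree q') : IsLowDegreeMultipleOfEsymmThree (q + q') := by
  obtain ⟨h1, a, h3⟩ := hq
  obtain ⟨h1', a', h3'⟩ := hq'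
  refine ⟨by simpa using add_mem h1 h1', a + a', ?_⟩
  convert add_mem h3 h3' using 1
  simp only [map_add]
  ring

theorem mul_esymm (hq : IsLowDegreeMultipleOfEsymmThree q) {k : ℕ} (hk : k ≠ 0) :
    IsLowDegreeMultipleOfEsymmThree (q * esymm σ R k) := by
  have he := isHomogeneous_esymm (σ := σ) (R := R) k
  have he₁ : esymm σ R 1 ∈ Ideal.span {esymm σ R 1} := Ideal.mem_span_singleton_self _
  match k, hk with
  | 1, _ =>
    refine ⟨?_, 0, ?_⟩ <;> rw [he.homogeneousComponent_mul_of_le (by norm_num)]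
    · exact Ideal.mul_mem_left _ _ he₁
    · simpa only [map_zero, zero_mul, sub_zero] using Ideal.mul_mem_left _ _ he₁
  | 2, _ =>
    refine ⟨?_, 0, ?_⟩
    · simp [he.homogeneousComponent_mul_of_lt]
    · simpa [he.homogeneousComponent_mul_of_le] using Ideal.mul_mem_right _ _ hq.1
  | 3, _ =>
    refine ⟨?_, coeff 0 q, ?_⟩
    · simp [he.homogeneousComponent_mul_of_lt]
    · simp [he.homogeneousComponent_mul_of_le, homogeneousComponent_zero]
  | k + 4, _ =>
    refine ⟨?_, 0, ?_⟩ <;> simp [he.homogeneousComponent_mul_of_lt]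

end IsLowDegreeMultipleOfEsymmThree

theorem isLowDegreeMultipleOfEsymmThree_aeval_esymm {n : ℕ} (p : MvPolynomial (Fin n) R) :
    IsLowDegreeMultipleOfEsymmThree (aeval (fun i : Fin n ↦ esymm σ R (i + 1)) p) := by
  induction p using MvPolynomial.induction_on with
  | C r => simpa using isLowDegreeMultipleOfEsymmThree_C r
  | add p p' hp hp' => simpa using hp.add hp'
  | mul_X p i hp => simpa using hp.mul_esymm (Nat.succ_ne_zero _)

theorem psum_three : psum σ R 3 =
    3 * esymm σ R 3 + esymm σ R 1 * (psum σ R 2 - esymm σ R 2) := by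
  have hindex : {a ∈ Finset.HasAntidiagonal.antidiagonal 3 | a.1 ∈ Set.Ioo 0 3} =
      {(1, 2), (2, 1)} := by decide
  rw [psum_eq_mul_esymm_sub_sum σ R 3 three_pos, hindex, Finset.sum_pair (by decide), psum_one,
    ← esymm_one]
  ring

theorem exists_eq_C_mul_psum_three_add_esymm_one_mul [Invertible (3 : R)]
    {f : MvPolynomial σ R} (hsym : f.IsSymmetric) (hhom : f.IsHomogeneous 3) :
    ∃ (a : R) (g : MvPolynomial σ R), f = C a * psum σ R 3 + esymm σ R 1 * g := by
  obtain ⟨p, hp⟩ := esymmAlgHom_surjective R le_rfl ⟨f, hsym⟩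
  obtain ⟨-, a, ha⟩ := isLowDegreeMultipleOfEsymmThree_aeval_esymm (σ := σ) p
  rw [← esymmAlgHom_apply, hp, homogeneousComponent_eq_self hhom] at ha
  have hpsum : psum σ R 3 - 3 * esymm σ R 3 ∈ Ideal.span {esymm σ R 1} :=
    Ideal.mem_span_singleton'.mpr ⟨psum σ R 2 - esymm σ R 2, by rw [psum_three]; ring⟩
  obtain ⟨g, hg⟩ := Ideal.mem_span_singleton'.mp
    (sub_mem ha (Ideal.mul_mem_left _ (C (⅟3 * a)) hpsum))
  refine ⟨⅟3 * a, g, ?_⟩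
  have hC : C (⅟3 * a) * 3 = (C a : MvPolynomial σ R) := by
    rw [← map_ofNat C 3, ← C_mul, mul_right_comm, invOf_mul_self, one_mul]
  linear_combination -hg - esymm σ R 3 * hC

end Cubic

end MvPolynomial

open MvPolynomial

/-- Every `𝔖₆`-invariant cubic form in six variables is, modulo the ideal generated by the
first power sum, a scalar multiple of the third power sum. -/
theorem segre_cubic_unique_invariant (f : MvPolynomial (Fin 6) ℂ)
    (hsym : f.IsSymmetric) (hhom : f.IsHomogeneous 3) :
    ∃ (a : ℂ) (g : MvPolynomial (Fin 6) ℂ),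
      f = C a * (∑ i : Fin 6, X i ^ 3) + (∑ i : Fin 6, X i) * g := by
  have : Invertible (3 : ℂ) := invertibleOfNonzero three_ne_zero
  simpa [psum, esymm_one] using exists_eq_C_mul_psum_three_add_esymm_one_mul hsym hhom
end

section
/- Let z : Fin 6 → ℂ be a nonzero vector with z_0+z_1+z_2+z_3+z_4+z_5 = 0. Then there exists λ ∈ ℂ with 3·z_i² = λ for all i (i.e. [z] is a singular point of the Segre cubic primal) if and only if there exist c ∈ ℂ with c ≠ 0 and a subset A ⊆ Fin 6 with |A| = 3 such that z_i = c for i ∈ A and z_i = −c for i ∉ A. Moreover any such z satisfies z_0³+⋯+z_5³ = 0, so these points lie on the Segre cubic. -/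
open Classical in
lemma segre_aux (z : Fin 6 → ℂ) (hz : z ≠ 0)
    (hsum : ∑ i, z i = 0) (h : ∃ lam : ℂ, ∀ i, 3 * z i ^ 2 = lam) :
    ∃ c : ℂ, c ≠ 0 ∧ ∃ A : Finset (Fin 6), A.card = 3 ∧
      ∀ i, z i = if i ∈ A then c else -c := by
  obtain ⟨lam, hlam⟩ := h
  have hsq : ∀ i, z i ^ 2 = z 0 ^ 2 := by
    intro i
    have := (hlam i).trans (hlam 0).symm
    linear_combination this / 3
  set c := z 0 with hc
  have hcne : c ≠ 0 := by
    intro h0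
    apply hz
    funext i
    have h1 : z i ^ 2 = 0 := by rw [hsq i, h0]; ring
    have : z i = 0 := by
      exact pow_eq_zero_iff (n := 2) (by norm_num) |>.mp h1
    simpa using this
  set A : Finset (Fin 6) := Finset.univ.filter (fun i => z i = c) with hA
  have hval : ∀ i, z i = if i ∈ A then c else -c := by
    intro i
    by_cases hi : i ∈ A
    · simp only [hi, if_true]
      simpa [hA] using hi
    · simp only [hi, if_false]
      have h2 : (z i - c) * (z i + c) = 0 := by linear_combination hsq i
      rcases mul_eq_zero.mp h2 with h | h
      · exact absurd (by simp [hA]; linear_combination h) hi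
      · linear_combination h
  refine ⟨c, hcne, A, ?_, hval⟩
  have hsplit : ∑ i, z i = ∑ i ∈ A, c + ∑ i ∈ Finset.univ \ A, (-c) := by
    rw [← Finset.sum_sdiff (Finset.subset_univ A), add_comm]
    congr 1
    · exact Finset.sum_congr rfl fun i hi => by rw [hval i, if_pos hi]
    · exact Finset.sum_congr rfl fun i hi => by
        rw [hval i, if_neg (Finset.mem_sdiff.mp hi).2]
  rw [hsum] at hsplit
  simp only [Finset.sum_const, nsmul_eq_mul] at hsplit
  have hcardle : A.card ≤ 6 := by
    simpa using Finset.card_le_card (Finset.subset_univ A)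
  have hcards : (Finset.univ \ A).card = 6 - A.card := by
    rw [Finset.card_sdiff_of_subset (Finset.subset_univ A)]
    simp
  rw [hcards] at hsplit
  have hkey : ((A.card : ℂ) - ((6 - A.card : ℕ) : ℂ)) * c = 0 := by
    linear_combination -hsplit
  rcases mul_eq_zero.mp hkey with h | h
  · have h' : (A.card : ℂ) = ((6 - A.card : ℕ) : ℂ) := by linear_combination h
    have := Nat.cast_injective (R := ℂ) h'
    omega
  · exact absurd h hcne

/-- A nonzero vector `z` with `∑ zᵢ = 0` represents a singular point of the Segre cubic
primal (i.e. `3 zᵢ² = λ` for all `i`) iff its coordinates are `c` on a `3`-element subset and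
`-c` elsewhere; moreover any such singular point lies on the Segre cubic (`∑ zᵢ³ = 0`). -/
theorem segre_cubic_singular_points (z : Fin 6 → ℂ) (hz : z ≠ 0)
    (hsum : ∑ i, z i = 0) :
    ((∃ lam : ℂ, ∀ i, 3 * z i ^ 2 = lam) ↔
      ∃ c : ℂ, c ≠ 0 ∧ ∃ A : Finset (Fin 6), A.card = 3 ∧
        ∀ i, z i = if i ∈ A then c else -c) ∧
    ((∃ lam : ℂ, ∀ i, 3 * z i ^ 2 = lam) → ∑ i, z i ^ 3 = 0) := by
  constructor
  · constructor
    · exact segre_aux z hz hsum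
    · rintro ⟨c, hc, A, hA, hval⟩
      refine ⟨3 * c ^ 2, fun i => ?_⟩
      rw [hval i]
      split <;> ring
  · intro h
    obtain ⟨c, hc, A, hA, hval⟩ := segre_aux z hz hsum h
    have hsplit : ∑ i, z i ^ 3 = ∑ i ∈ A, c ^ 3 + ∑ i ∈ Finset.univ \ A, (-c) ^ 3 := by
      rw [← Finset.sum_sdiff (Finset.subset_univ A), add_comm]
      congr 1
      · exact Finset.sum_congr rfl fun i hi => by rw [hval i, if_pos hi]
      · exact Finset.sum_congr rfl fun i hi => by
          rw [hval i, if_neg (Finset.mem_sdiff.mp hi).2]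
    rw [hsplit, Finset.sum_const, Finset.sum_const,
      Finset.card_sdiff_of_subset (Finset.subset_univ A), hA]
    simp
    ring
end

section
/- The set of one-dimensional ℂ-linear subspaces of (Fin 6 → ℂ) of the form ℂ·z, where z is a nonzero vector with z_0+⋯+z_5 = 0 for which there exists λ ∈ ℂ with 3·z_i² = λ for all i, has exactly 10 elements. (The singular locus of the Segre cubic primal consists of exactly 10 points, its 10 nodes.) -/
open Submodule Finset

/-- Sign vector of a subset `S` of `Fin 6`. -/
noncomputable def sgn6 (S : Finset (Fin 6)) : Fin 6 → ℂ := fun i => if i ∈ S then 1 else -1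

lemma sgn6_sum (S : Finset (Fin 6)) :
    (∑ i, sgn6 S i) = (S.card : ℂ) - (Sᶜ.card : ℂ) := by
  rw [← Finset.sum_add_sum_compl S]
  have h1 : ∑ i ∈ S, sgn6 S i = (S.card : ℂ) := by
    have h : ∀ i ∈ S, sgn6 S i = 1 := fun i hi => by simp [sgn6, hi]
    rw [Finset.sum_congr rfl h, Finset.sum_const, nsmul_eq_mul, mul_one]
  have h2 : ∑ i ∈ Sᶜ, sgn6 S i = -(Sᶜ.card : ℂ) := by
    have h : ∀ i ∈ Sᶜ, sgn6 S i = -1 := fun i hi => by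
      simp only [Finset.mem_compl] at hi
      simp [sgn6, hi]
    rw [Finset.sum_congr rfl h, Finset.sum_const, nsmul_eq_mul, mul_neg_one]
  rw [h1, h2]; ring

/-- The singular locus of the Segre cubic primal consists of exactly `10` points (nodes),
viewed as one-dimensional subspaces `ℂ·z` of `ℂ⁶`. -/
theorem segre_cubic_ten_nodes :
    {W : Submodule ℂ (Fin 6 → ℂ) | ∃ z : Fin 6 → ℂ, z ≠ 0 ∧ (∑ i, z i) = 0 ∧
      (∃ lam : ℂ, ∀ i, 3 * z i ^ 2 = lam) ∧
      W = Submodule.span ℂ {z}}.ncard = 10 := by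
  classical
  set F : Finset (Finset (Fin 6)) :=
    Finset.univ.filter (fun S => S.card = 3 ∧ 0 ∈ S) with hF
  have hset : {W : Submodule ℂ (Fin 6 → ℂ) | ∃ z : Fin 6 → ℂ, z ≠ 0 ∧ (∑ i, z i) = 0 ∧
      (∃ lam : ℂ, ∀ i, 3 * z i ^ 2 = lam) ∧
      W = Submodule.span ℂ {z}}
      = ↑(F.image (fun S => Submodule.span ℂ {sgn6 S})) := by
    ext W
    simp only [Set.mem_setOf_eq, Finset.coe_image, Set.mem_image, Finset.mem_coe, hF,
      Finset.mem_filter, Finset.mem_univ, true_and]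
    constructor
    · rintro ⟨z, hz0, hsum, ⟨lam, hlam⟩, rfl⟩
      -- z 0 ≠ 0
      have hz00 : z 0 ≠ 0 := by
        intro h
        apply hz0
        funext i
        have h1 := hlam i
        have h2 := hlam 0
        rw [h] at h2
        norm_num at h2
        rw [← h2] at h1
        have : z i ^ 2 = 0 := by linear_combination h1 / 3
        simpa using sq_eq_zero_iff.mp this
      -- each z i = ± z 0
      have hpm : ∀ i, z i = z 0 ∨ z i = -(z 0) := by
        intro i
        have h1 := hlam i
        have h2 := hlam 0
        have h3 : (z i - z 0) * (z i + z 0) = 0 := by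
          linear_combination (h1 - h2) / 3
        rcases mul_eq_zero.mp h3 with h | h
        · left; exact sub_eq_zero.mp h
        · right; linear_combination h
      set S : Finset (Fin 6) := Finset.univ.filter (fun i => z i = z 0) with hSdef
      have hS0 : (0 : Fin 6) ∈ S := by simp [hSdef]
      have hz_pt : ∀ i, z i = z 0 * sgn6 S i := by
        intro i
        by_cases h : z i = z 0
        · have hi : i ∈ S := by simp [hSdef, h]
          simp [sgn6, hi, h]
        · have h2 := (hpm i).resolve_left h
          have hni : i ∉ S := by simpa [hSdef] using h
          simp only [sgn6, if_neg hni, h2]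
          ring
      have hz_eq : z = (z 0) • sgn6 S := funext fun i => by
        rw [hz_pt i]; simp
      have hcast : (S.card : ℂ) - (Sᶜ.card : ℂ) = 0 := by
        have h1 : ∑ i, z i = z 0 * ∑ i, sgn6 S i := by
          rw [Finset.mul_sum]
          exact Finset.sum_congr rfl fun i _ => hz_pt i
        rw [hsum, sgn6_sum] at h1
        rcases mul_eq_zero.mp h1.symm with h | h
        · exact absurd h hz00
        · exact h
      have hcards : S.card = Sᶜ.card := by
        have : (S.card : ℂ) = (Sᶜ.card : ℂ) := by linear_combination hcast
        exact_mod_cast this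
      have htot : S.card + Sᶜ.card = 6 := by
        simpa using Finset.card_add_card_compl S
      have hcard3 : S.card = 3 := by omega
      refine ⟨S, ⟨hcard3, hS0⟩, ?_⟩
      rw [hz_eq]
      exact (Submodule.span_singleton_smul_eq (IsUnit.mk0 _ hz00) _).symm
    · rintro ⟨S, ⟨hS3, hS0⟩, rfl⟩
      refine ⟨sgn6 S, ?_, ?_, ⟨3, ?_⟩, rfl⟩
      · intro h
        have : sgn6 S 0 = 0 := by rw [h]; rfl
        simp [sgn6, hS0] at this
      · rw [sgn6_sum, hS3]
        have : Sᶜ.card = 3 := by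
          have := Finset.card_add_card_compl S
          simp [hS3, Fintype.card_fin] at this
          omega
        rw [this]; ring
      · intro i
        by_cases h : i ∈ S <;> simp [sgn6, h] <;> ring
  rw [hset, Set.ncard_coe_finset]
  rw [Finset.card_image_of_injOn]
  · rw [hF]; decide
  · intro S hS T hT hST
    simp only [hF, Finset.coe_filter, Set.mem_setOf_eq, Finset.mem_univ, true_and] at hS hT
    have hST' : Submodule.span ℂ {sgn6 S} = Submodule.span ℂ {sgn6 T} := hST
    have hmem : sgn6 S ∈ Submodule.span ℂ {sgn6 T} := by
      rw [← hST']; exact Submodule.mem_span_singleton_self _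
    obtain ⟨a, ha⟩ := Submodule.mem_span_singleton.mp hmem
    have ha0 : a = 1 := by
      have := congrFun ha 0
      simp [sgn6, hS.2, hT.2] at this
      simpa using this
    rw [ha0, one_smul] at ha
    ext i
    constructor <;> intro hi
    · by_contra h
      have := congrFun ha i
      simp [sgn6, hi, h] at this
      exact (by norm_num : (1:ℂ) ≠ -1) this.symm
    · by_contra h
      have := congrFun ha i
      simp [sgn6, hi, h] at this
      exact (by norm_num : (1:ℂ) ≠ -1) this
end

section
/- Let N be the set of vectors v : Fin 6 → ℂ with every coordinate equal to 1 or −1 and with exactly three coordinates equal to 1 (the 20 vectors representing the 10 nodes of the Segre cubic), and for each perfect matching M of Fin 6 let Π_M := {z : Fin 6 → ℂ | z_a + z_b = 0 for every {a,b} ∈ M}. Then: (1) v ∈ Π_M if and only if every pair of M contains exactly one index i with v_i = 1; (2) each of the 15 planes Π_M contains exactly 8 of the 20 vectors of N (hence 4 of the 10 nodes); (3) each vector v ∈ N lies in Π_M for exactly 6 of the 15 perfect matchings M. (This is the (15_4, 10_6)-configuration of the 15 planes and 10 nodes of the Segre cubic primal.) -/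
/-- A perfect matching of `Fin 6`. -/
def IsPerfectMatching (M : Finset (Finset (Fin 6))) : Prop :=
  M.card = 3 ∧ (∀ p ∈ M, p.card = 2) ∧
    (∀ p ∈ M, ∀ q ∈ M, p ≠ q → Disjoint p q) ∧
    ∀ i : Fin 6, ∃ p ∈ M, i ∈ p

/-- The vectors with coordinates `±1`, exactly three of them equal to `1`, representing the
ten nodes of the Segre cubic primal. -/
def NodeVectors : Set (Fin 6 → ℂ) :=
  {v | (∀ i, v i = 1 ∨ v i = -1) ∧ {i : Fin 6 | v i = 1}.ncard = 3}

/-- The plane `Π_M` associated to a perfect matching `M`. -/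
def PlaneOf (M : Finset (Finset (Fin 6))) : Set (Fin 6 → ℂ) :=
  {z | ∀ p ∈ M, ∀ a ∈ p, ∀ b ∈ p, a ≠ b → z a + z b = 0}

/- ### Auxiliary material -/

def segreSgn (s : Fin 6 → Bool) : Fin 6 → ℂ := fun i => if s i then 1 else -1

lemma segreSgn_eq_one {s : Fin 6 → Bool} {i : Fin 6} : segreSgn s i = 1 ↔ s i = true := by
  cases h : s i <;> simp [segreSgn, h] <;> norm_num

lemma segreSgn_inj : Function.Injective segreSgn := by
  intro s t h
  funext i
  have h' := congrFun h i
  cases hs : s i <;> cases ht : t i <;>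
    simp [segreSgn, hs, ht] at h' ⊢ <;> norm_num at h'

lemma mem_nodeVectors_iff {v : Fin 6 → ℂ} :
    v ∈ NodeVectors ↔ ∃ s : Fin 6 → Bool,
      (Finset.univ.filter fun i => s i = true).card = 3 ∧ v = segreSgn s := by
  classical
  constructor
  · rintro ⟨h1, h2⟩
    refine ⟨fun i => if v i = 1 then true else false, ?_, ?_⟩
    · have hset : {i : Fin 6 | v i = 1} =
          ↑(Finset.univ.filter fun i => (if v i = 1 then true else false) = true) := by
        ext i
        by_cases h : v i = 1 <;> simp [h]
      rw [hset, Set.ncard_coe_finset] at h2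
      exact h2
    · funext i
      by_cases h : v i = 1
      · simp [segreSgn, h]
      · rcases h1 i with h' | h'
        · exact absurd h' h
        · simp only [segreSgn, h']
          norm_num
  · rintro ⟨s, hs, rfl⟩
    constructor
    · intro i
      cases h : s i <;> simp [segreSgn, h]
    · have hset : {i : Fin 6 | segreSgn s i = 1} =
          ↑(Finset.univ.filter fun i => s i = true) := by
        ext i
        simp [segreSgn_eq_one]
      rw [hset, Set.ncard_coe_finset]
      exact hs

lemma segreSgn_add_eq_zero_iff {s : Fin 6 → Bool} {a b : Fin 6} :
    segreSgn s a + segreSgn s b = 0 ↔ s a ≠ s b := by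
  cases ha : s a <;> cases hb : s b <;> simp [segreSgn, ha, hb] <;> norm_num

lemma segreSgn_mem_plane_iff {s : Fin 6 → Bool} {M : Finset (Finset (Fin 6))} :
    segreSgn s ∈ PlaneOf M ↔ ∀ p ∈ M, ∀ a ∈ p, ∀ b ∈ p, a ≠ b → s a ≠ s b := by
  constructor
  · intro h p hp a ha b hb hab
    exact segreSgn_add_eq_zero_iff.mp (h p hp a ha b hb hab)
  · intro h p hp a ha b hb hab
    exact segreSgn_add_eq_zero_iff.mpr (h p hp a ha b hb hab)

/-- The 15 perfect matchings of `Fin 6`. -/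
def segreL : Finset (Finset (Finset (Fin 6))) :=
  { { {0,1}, {2,3}, {4,5} }, { {0,1}, {2,4}, {3,5} }, { {0,1}, {2,5}, {3,4} },
    { {0,2}, {1,3}, {4,5} }, { {0,2}, {1,4}, {3,5} }, { {0,2}, {1,5}, {3,4} },
    { {0,3}, {1,2}, {4,5} }, { {0,3}, {1,4}, {2,5} }, { {0,3}, {1,5}, {2,4} },
    { {0,4}, {1,2}, {3,5} }, { {0,4}, {1,3}, {2,5} }, { {0,4}, {1,5}, {2,3} },
    { {0,5}, {1,2}, {3,4} }, { {0,5}, {1,3}, {2,4} }, { {0,5}, {1,4}, {2,3} } }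

def segreFilter : Finset (Finset (Finset (Fin 6))) :=
  (((Finset.univ : Finset (Fin 6)).powersetCard 2).powersetCard 3).filter
    (fun M => (∀ p ∈ M, ∀ q ∈ M, p ≠ q → Disjoint p q) ∧ ∀ i : Fin 6, ∃ p ∈ M, i ∈ p)

set_option maxRecDepth 100000 in
set_option maxHeartbeats 4000000 in
lemma segreFilter_card : segreFilter.card = 15 := by decide

lemma segreL_facts : ∀ M ∈ segreL, M.card = 3 ∧ (∀ p ∈ M, p.card = 2) ∧
    (∀ p ∈ M, ∀ q ∈ M, p ≠ q → Disjoint p q) ∧ ∀ i : Fin 6, ∃ p ∈ M, i ∈ p := by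
  intro M hM
  simp only [segreL, Finset.mem_insert, Finset.mem_singleton] at hM
  rcases hM with rfl|rfl|rfl|rfl|rfl|rfl|rfl|rfl|rfl|rfl|rfl|rfl|rfl|rfl|rfl <;>
    exact ⟨by decide, by decide, by set_option maxRecDepth 20000 in decide, by decide⟩

set_option maxRecDepth 100000 in
lemma segreL_card : segreL.card = 15 := by decide

lemma segreL_eq_filter : segreL = segreFilter := by
  apply Finset.eq_of_subset_of_card_le
  · intro M hM
    obtain ⟨h3, h2, hd, hc⟩ := segreL_facts M hM
    rw [segreFilter, Finset.mem_filter, Finset.mem_powersetCard]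
    refine ⟨⟨?_, h3⟩, hd, hc⟩
    intro p hp
    rw [Finset.mem_powersetCard_univ]
    exact h2 p hp
  · rw [segreFilter_card, segreL_card]

lemma isPerfectMatching_iff {M : Finset (Finset (Fin 6))} :
    IsPerfectMatching M ↔ M ∈ segreL := by
  constructor
  · rintro ⟨h3, h2, hd, hc⟩
    rw [segreL_eq_filter, segreFilter, Finset.mem_filter, Finset.mem_powersetCard]
    refine ⟨⟨?_, h3⟩, hd, hc⟩
    intro p hp
    rw [Finset.mem_powersetCard_univ]
    exact h2 p hp
  · intro hM
    obtain ⟨h3, h2, hd, hc⟩ := segreL_facts M hM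
    exact ⟨h3, h2, hd, hc⟩

lemma segre_count8 : ∀ M ∈ segreL,
    (Finset.univ.filter fun s : Fin 6 → Bool =>
      (Finset.univ.filter fun i => s i = true).card = 3 ∧
      ∀ p ∈ M, ∀ a ∈ p, ∀ b ∈ p, a ≠ b → s a ≠ s b).card = 8 := by
  intro M hM
  simp only [segreL, Finset.mem_insert, Finset.mem_singleton] at hM
  rcases hM with rfl|rfl|rfl|rfl|rfl|rfl|rfl|rfl|rfl|rfl|rfl|rfl|rfl|rfl|rfl <;>
    set_option maxRecDepth 100000 in decide

set_option maxRecDepth 100000 in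
set_option maxHeartbeats 1000000 in
lemma segre_count6 : ∀ s : Fin 6 → Bool, (Finset.univ.filter fun i => s i = true).card = 3 →
    (segreL.filter fun M => ∀ p ∈ M, ∀ a ∈ p, ∀ b ∈ p, a ≠ b → s a ≠ s b).card = 6 := by decide

/-- The `(15₄, 10₆)`-configuration of the `15` planes and `10` nodes of the Segre cubic:
(1) a node vector lies in `Π_M` iff every pair of `M` contains exactly one coordinate equal
to `1`; (2) each plane contains exactly `8` of the `20` node vectors; (3) each node vector
lies in exactly `6` of the `15` planes. -/
theorem segre_configuration_15_4_10_6 :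
    (∀ M : Finset (Finset (Fin 6)), IsPerfectMatching M →
      ∀ v ∈ NodeVectors, (v ∈ PlaneOf M ↔ ∀ p ∈ M, ∃! i, i ∈ p ∧ v i = 1)) ∧
    (∀ M : Finset (Finset (Fin 6)), IsPerfectMatching M →
      {v ∈ NodeVectors | v ∈ PlaneOf M}.ncard = 8) ∧
    (∀ v ∈ NodeVectors,
      {M : Finset (Finset (Fin 6)) | IsPerfectMatching M ∧ v ∈ PlaneOf M}.ncard = 6) := by
  have one_ne_neg_one : (1 : ℂ) ≠ -1 := by norm_num
  refine ⟨?_, ?_, ?_⟩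
  · -- Part 1
    rintro M ⟨h3, h2, hd, hc⟩ v ⟨h1, _⟩
    constructor
    · intro hv p hp
      obtain ⟨a, b, hab, rfl⟩ := Finset.card_eq_two.mp (h2 p hp)
      have hsum := hv _ hp a (by simp) b (by simp) hab
      rcases h1 a with ha | ha
      · refine ⟨a, ⟨by simp, ha⟩, ?_⟩
        rintro i ⟨hi, hvi⟩
        rcases Finset.mem_insert.mp hi with rfl | hi
        · rfl
        · exfalso
          rw [Finset.mem_singleton] at hi
          subst hi
          rw [ha, hvi] at hsum
          norm_num at hsum
      · have hb : v b = 1 := by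
          rcases h1 b with hb | hb
          · exact hb
          · exfalso; rw [ha, hb] at hsum; norm_num at hsum
        refine ⟨b, ⟨by simp, hb⟩, ?_⟩
        rintro i ⟨hi, hvi⟩
        rcases Finset.mem_insert.mp hi with rfl | hi
        · exact absurd hvi (by rw [ha]; exact fun h => one_ne_neg_one h.symm)
        · exact Finset.mem_singleton.mp hi
    · intro h p hp a ha b hb hab
      obtain ⟨i, ⟨hip, hvi⟩, huniq⟩ := h p hp
      rcases h1 a with hva | hva <;> rcases h1 b with hvb | hvb
      · exact absurd ((huniq a ⟨ha, hva⟩).trans (huniq b ⟨hb, hvb⟩).symm) hab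
      · rw [hva, hvb]; ring
      · rw [hva, hvb]; ring
      · exfalso
        have hp2 : p = {a, b} := by
          apply (Finset.eq_of_subset_of_card_le ?_ ?_).symm
          · intro x hx
            rcases Finset.mem_insert.mp hx with rfl | hx
            · exact ha
            · rw [Finset.mem_singleton] at hx; subst hx; exact hb
          · rw [h2 p hp, Finset.card_insert_of_notMem (by simpa using hab),
              Finset.card_singleton]
        rw [hp2] at hip
        rcases Finset.mem_insert.mp hip with rfl | hip
        · rw [hva] at hvi; exact one_ne_neg_one hvi.symm
        · rw [Finset.mem_singleton] at hip; subst hip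
          rw [hvb] at hvi; exact one_ne_neg_one hvi.symm
  · -- Part 2
    intro M hM
    have hML := isPerfectMatching_iff.mp hM
    have hset : {v ∈ NodeVectors | v ∈ PlaneOf M} =
        ↑((Finset.univ.filter fun s : Fin 6 → Bool =>
            (Finset.univ.filter fun i => s i = true).card = 3 ∧
            ∀ p ∈ M, ∀ a ∈ p, ∀ b ∈ p, a ≠ b → s a ≠ s b).image segreSgn) := by
      ext v
      simp only [Set.mem_setOf_eq, Finset.coe_image, Set.mem_image, Finset.mem_coe,
        Finset.mem_filter, Finset.mem_univ, true_and]
      constructor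
      · rintro ⟨hv, hplane⟩
        obtain ⟨s, hs, rfl⟩ := mem_nodeVectors_iff.mp hv
        exact ⟨s, ⟨hs, segreSgn_mem_plane_iff.mp hplane⟩, rfl⟩
      · rintro ⟨s, ⟨hs, hplane⟩, rfl⟩
        exact ⟨mem_nodeVectors_iff.mpr ⟨s, hs, rfl⟩, segreSgn_mem_plane_iff.mpr hplane⟩
    rw [hset, Set.ncard_coe_finset, Finset.card_image_of_injective _ segreSgn_inj]
    exact segre_count8 M hML
  · -- Part 3
    intro v hv
    obtain ⟨s, hs, rfl⟩ := mem_nodeVectors_iff.mp hv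
    have hset : {M : Finset (Finset (Fin 6)) | IsPerfectMatching M ∧ segreSgn s ∈ PlaneOf M} =
        ↑(segreL.filter fun M => ∀ p ∈ M, ∀ a ∈ p, ∀ b ∈ p, a ≠ b → s a ≠ s b) := by
      ext M
      simp only [Set.mem_setOf_eq, Finset.coe_filter, Set.mem_setOf_eq]
      rw [isPerfectMatching_iff, segreSgn_mem_plane_iff]
    rw [hset, Set.ncard_coe_finset]
    exact segre_count6 s hs
end

section
/- Let M be a perfect matching of Fin 6 and let z : Fin 6 → ℂ satisfy z_0+⋯+z_5 = 0 and z_a = z_b for every pair {a,b} ∈ M. Then there exists λ ∈ ℂ with 4·z_i³ − (z_0²+⋯+z_5²)·z_i = λ for every i ∈ Fin 6; that is, every point of the line L_M := {z : Σ z_i = 0 and z_a = z_b for all {a,b} ∈ M} is a singular point of the Igusa quartic. (The singular locus of the Igusa quartic contains the 15 lines L_M.) -/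
/-- Every point of the line `L_M = {z | ∑ zᵢ = 0, z_a = z_b for all {a,b} ∈ M}` is a singular
point of the Igusa quartic: the gradient of `∑ zᵢ⁴ - ¼ (∑ zᵢ²)²` at `z` is proportional to
`(1,…,1)`. -/
theorem igusa_singular_lines (M : Finset (Finset (Fin 6)))
    (hM : IsPerfectMatching M) (z : Fin 6 → ℂ)
    (hsum : ∑ i, z i = 0)
    (hz : ∀ p ∈ M, ∀ a ∈ p, ∀ b ∈ p, z a = z b) :
    ∃ lam : ℂ, ∀ i, 4 * z i ^ 3 - (∑ j, z j ^ 2) * z i = lam := by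
  obtain ⟨hcard, hpc, hdis, hcov⟩ := hM
  obtain ⟨p, q, r, hpq, hpr, hqr, hMeq⟩ := Finset.card_eq_three.mp hcard
  subst hMeq
  have hpM : p ∈ ({p, q, r} : Finset (Finset (Fin 6))) := by simp
  have hqM : q ∈ ({p, q, r} : Finset (Finset (Fin 6))) := by simp
  have hrM : r ∈ ({p, q, r} : Finset (Finset (Fin 6))) := by simp
  obtain ⟨a, b, hab, hp⟩ := Finset.card_eq_two.mp (hpc p hpM)
  obtain ⟨c, d, hcd, hq⟩ := Finset.card_eq_two.mp (hpc q hqM)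
  obtain ⟨e, f, hef, hr⟩ := Finset.card_eq_two.mp (hpc r hrM)
  have haP : a ∈ p := by simp [hp]
  have hbP : b ∈ p := by simp [hp]
  have hcQ : c ∈ q := by simp [hq]
  have hdQ : d ∈ q := by simp [hq]
  have heR : e ∈ r := by simp [hr]
  have hfR : f ∈ r := by simp [hr]
  set x := z a with hx
  set y := z c with hy
  set w := z e with hw
  have hzb : z b = x := hz p hpM b hbP a haP
  have hzd : z d = y := hz q hqM d hdQ c hcQ
  have hzf : z f = w := hz r hrM f hfR e heR
  have hcover : ∀ i : Fin 6, i ∈ p ∨ i ∈ q ∨ i ∈ r := by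
    intro i
    obtain ⟨s, hs, his⟩ := hcov i
    simp only [Finset.mem_insert, Finset.mem_singleton] at hs
    rcases hs with h | h | h <;> subst h <;> tauto
  have huniv : p ∪ q ∪ r = (Finset.univ : Finset (Fin 6)) := by
    ext i
    simp only [Finset.mem_union, Finset.mem_univ, iff_true]
    have := hcover i
    tauto
  have hdpq : Disjoint p q := hdis p hpM q hqM hpq
  have hdpr : Disjoint p r := hdis p hpM r hrM hpr
  have hdqr : Disjoint q r := hdis q hqM r hrM hqr
  have hsplit : ∀ g : Fin 6 → ℂ,
      ∑ i, g i = (∑ i ∈ p, g i) + (∑ i ∈ q, g i) + (∑ i ∈ r, g i) := by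
    intro g
    rw [← huniv, Finset.sum_union (Finset.disjoint_union_left.mpr ⟨hdpr, hdqr⟩),
      Finset.sum_union hdpq]
  have hsum' : (x + x) + ((y + y) + (w + w)) = 0 := by
    have h := hsplit z
    rw [hsum, hp, hq, hr, Finset.sum_pair hab, Finset.sum_pair hcd,
      Finset.sum_pair hef, hzb, hzd, hzf] at h
    linear_combination -h
  have hxyw : x + y + w = 0 := by linear_combination hsum' / 2
  have hS : ∑ j, z j ^ 2 = 2 * (x ^ 2 + y ^ 2 + w ^ 2) := by
    have h := hsplit (fun j => z j ^ 2)
    rw [hp, hq, hr, Finset.sum_pair hab, Finset.sum_pair hcd,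
      Finset.sum_pair hef] at h
    simp only [hzb, hzd, hzf] at h
    rw [h]; ring
  refine ⟨4 * x ^ 3 - 2 * (x ^ 2 + y ^ 2 + w ^ 2) * x, fun i => ?_⟩
  rw [hS]
  rcases hcover i with hi | hi | hi
  · rw [hz p hpM i hi a haP]
  · rw [hz q hqM i hi c hcQ]
    linear_combination (2 * (y - x) * (x + y - w)) * hxyw
  · rw [hz r hrM i hi e heR]
    linear_combination (2 * (w - x) * (x + w - y)) * hxyw
end

section
/- For a 2-element subset {i,j} of Fin 6 let P_{ij} : Fin 6 → ℂ be the vector with coordinates equal to −2 at i and at j and equal to 1 at the other four indices, and for a perfect matching M of Fin 6 let L_M := {z : Fin 6 → ℂ | Σ z_i = 0 and z_a = z_b for every {a,b} ∈ M}. Then P_{ij} ∈ L_M if and only if {i,j} ∈ M. Consequently each of the 15 lines L_M contains exactly 3 of the 15 points ℂ·P_{ij}, and each point ℂ·P_{ij} lies on exactly 3 of the 15 lines L_M. (The 15 singular lines of the Igusa quartic pass 3 by 3 through its 15 triple points.) -/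
/-- The vector `P_{ij}` (for `s = {i,j}`): coordinates `-2` on `s` and `1` elsewhere. -/
def TriplePoint (s : Finset (Fin 6)) : Fin 6 → ℂ :=
  fun k => if k ∈ s then -2 else 1

/-- The singular line `L_M` of the Igusa quartic. -/
def LineOf (M : Finset (Finset (Fin 6))) : Set (Fin 6 → ℂ) :=
  {z | (∑ i, z i) = 0 ∧ ∀ p ∈ M, ∀ a ∈ p, ∀ b ∈ p, z a = z b}

instance : DecidablePred IsPerfectMatching := fun M => by
  unfold IsPerfectMatching; infer_instance

lemma sum_triplePoint (s : Finset (Fin 6)) (hs : s.card = 2) :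
    (∑ i, TriplePoint s i) = 0 := by
  unfold TriplePoint
  rw [Finset.sum_ite, Finset.sum_const, Finset.sum_const]
  have h1 : (Finset.univ.filter (· ∈ s)) = s := by ext x; simp
  have h2 : (Finset.univ.filter (¬ · ∈ s)).card = 4 := by
    rw [Finset.filter_not, Finset.card_sdiff_of_subset (Finset.subset_univ _), h1]
    simp [hs]
  rw [h1, h2, hs]
  norm_num

lemma key (s : Finset (Fin 6)) (hs : s.card = 2)
    (M : Finset (Finset (Fin 6))) (hM : IsPerfectMatching M) :
    TriplePoint s ∈ LineOf M ↔ s ∈ M := by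
  obtain ⟨hcard, h2, hdisj, hcov⟩ := hM
  constructor
  · rintro ⟨-, hconst⟩
    obtain ⟨i, hi⟩ : ∃ i, i ∈ s := Finset.card_pos.mp (by omega) |>.imp fun _ h => h
    obtain ⟨p, hp, hip⟩ := hcov i
    obtain ⟨a, b, hab, rfl⟩ := Finset.card_eq_two.mp (h2 _ hp)
    have hsub : ({a, b} : Finset (Fin 6)) ⊆ s := by
      intro x hx
      have hxi : TriplePoint s x = TriplePoint s i :=
        hconst _ hp x hx i hip
      have : TriplePoint s i = -2 := by simp [TriplePoint, hi]
      by_contra hxs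
      have : TriplePoint s x = 1 := by simp [TriplePoint, hxs]
      simp_all
      norm_num at hxi
    have := Finset.eq_of_subset_of_card_le hsub (by simp [hs, Finset.card_pair hab])
    rwa [this] at hp
  · intro hsM
    refine ⟨sum_triplePoint s hs, ?_⟩
    intro p hp a ha b hb
    by_cases hps : p = s
    · subst hps; simp [TriplePoint, ha, hb]
    · have hd := hdisj p hp s hsM hps
      have ha' : a ∉ s := Finset.disjoint_left.mp hd ha
      have hb' : b ∉ s := Finset.disjoint_left.mp hd hb
      simp [TriplePoint, ha', hb']

set_option maxRecDepth 100000 in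
set_option maxHeartbeats 4000000 in
lemma count3 : ∀ s ∈ (Finset.univ.powersetCard 2 : Finset (Finset (Fin 6))),
    (((Finset.univ.powersetCard 2 : Finset (Finset (Fin 6))).powersetCard 3).filter
      (fun M => IsPerfectMatching M ∧ s ∈ M)).card = 3 := by decide

/-- `P_{ij} ∈ L_M` iff `{i,j} ∈ M`; hence each of the `15` singular lines of the Igusa
quartic contains exactly `3` of the `15` triple points, and each triple point lies on
exactly `3` lines. -/
theorem igusa_triple_points_on_lines :
    (∀ s : Finset (Fin 6), s.card = 2 →
      ∀ M : Finset (Finset (Fin 6)), IsPerfectMatching M →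
        (TriplePoint s ∈ LineOf M ↔ s ∈ M)) ∧
    (∀ M : Finset (Finset (Fin 6)), IsPerfectMatching M →
      {s : Finset (Fin 6) | s.card = 2 ∧ TriplePoint s ∈ LineOf M}.ncard = 3) ∧
    (∀ s : Finset (Fin 6), s.card = 2 →
      {M : Finset (Finset (Fin 6)) |
        IsPerfectMatching M ∧ TriplePoint s ∈ LineOf M}.ncard = 3) := by
  refine ⟨key, ?_, ?_⟩
  · intro M hM
    have : {s : Finset (Fin 6) | s.card = 2 ∧ TriplePoint s ∈ LineOf M} = ↑M := by
      ext s
      simp only [Set.mem_setOf_eq, Finset.coe_mem, Finset.mem_coe]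
      constructor
      · rintro ⟨h1, h2⟩; exact (key s h1 M hM).mp h2
      · intro hs
        have h1 := hM.2.1 s hs
        exact ⟨h1, (key s h1 M hM).mpr hs⟩
    rw [this, Set.ncard_coe_finset, hM.1]
  · intro s hs
    have : {M : Finset (Finset (Fin 6)) | IsPerfectMatching M ∧ TriplePoint s ∈ LineOf M} =
        ↑(((Finset.univ.powersetCard 2 : Finset (Finset (Fin 6))).powersetCard 3).filter
          (fun M => IsPerfectMatching M ∧ s ∈ M)) := by
      ext M
      simp only [Set.mem_setOf_eq, Finset.coe_filter, Finset.mem_powersetCard]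
      constructor
      · rintro ⟨hM, hline⟩
        refine ⟨⟨?_, hM.1⟩, hM, (key s hs M hM).mp hline⟩
        intro p hp
        rw [Finset.mem_powersetCard]
        exact ⟨Finset.subset_univ _, hM.2.1 p hp⟩
      · rintro ⟨-, hM, hsM⟩
        exact ⟨hM, (key s hs M hM).mpr hsM⟩
    rw [this, Set.ncard_coe_finset]
    exact count3 s (Finset.mem_powersetCard.mpr ⟨Finset.subset_univ _, hs⟩)
end

section
/- Let M and M′ be two distinct perfect matchings of Fin 6 and let L_M := {z : Fin 6 → ℂ | Σ z_i = 0 and z_a = z_b for every {a,b} ∈ M}, and similarly L_{M′}. If M and M′ have no 2-element subset in common then L_M ∩ L_{M′} = {0}. If M and M′ have a (necessarily unique) common 2-element subset {i,j}, then L_M ∩ L_{M′} is the one-dimensional subspace spanned by the vector P_{ij} whose coordinates equal −2 at i and j and equal 1 at the other four indices. (Two of the 15 singular lines of the Igusa quartic meet exactly when the corresponding matchings share a pair, and then they meet in a triple point.) -/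
namespace IgusaAux

/-- A set saturated under a matching: it contains every pair it meets. -/
def Sat (M : Finset (Finset (Fin 6))) (S : Finset (Fin 6)) : Prop :=
  ∀ p ∈ M, ∀ i ∈ p, i ∈ S → p ⊆ S

lemma sat_even {M : Finset (Finset (Fin 6))} {S : Finset (Fin 6)}
    (hM : IsPerfectMatching M) (h : Sat M S) : 2 ∣ S.card := by
  obtain ⟨hc, h2, hd, hcov⟩ := hM
  have hS : S = (M.filter (· ⊆ S)).biUnion id := by
    ext i
    simp only [Finset.mem_biUnion, Finset.mem_filter, id]
    constructor
    · intro hi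
      obtain ⟨p, hp, hip⟩ := hcov i
      exact ⟨p, ⟨hp, h p hp i hip hi⟩, hip⟩
    · rintro ⟨p, ⟨hp, hps⟩, hip⟩; exact hps hip
  have hdisj : ∀ p ∈ M.filter (· ⊆ S), ∀ q ∈ M.filter (· ⊆ S), p ≠ q →
      Disjoint (id p) (id q) := by
    intro p hp q hq hpq
    exact hd p (Finset.mem_filter.1 hp).1 q (Finset.mem_filter.1 hq).1 hpq
  rw [hS, Finset.card_biUnion hdisj]
  refine ⟨(M.filter (· ⊆ S)).card, ?_⟩
  rw [Finset.sum_congr rfl (fun p hp => (h2 p (Finset.mem_filter.1 hp).1 : (id p).card = 2)),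
    Finset.sum_const, smul_eq_mul, mul_comm]

lemma sat_compl {M : Finset (Finset (Fin 6))} {S : Finset (Fin 6)}
    (h : Sat M S) : Sat M Sᶜ := by
  intro p hp i hip hiS j hjp
  by_contra hj
  simp only [Finset.mem_compl, not_not] at hj ⊢
  exact (Finset.mem_compl.1 hiS) (h p hp j hjp hj hip)

lemma sat_mem {M : Finset (Finset (Fin 6))} {S : Finset (Fin 6)}
    (hM : IsPerfectMatching M) (h : Sat M S) (hcard : S.card = 2) : S ∈ M := by
  obtain ⟨hc, h2, hd, hcov⟩ := hM
  have hne : S.Nonempty := Finset.card_pos.1 (by omega)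
  obtain ⟨i, hi⟩ := hne
  obtain ⟨p, hp, hip⟩ := hcov i
  have hps : p ⊆ S := h p hp i hip hi
  have : p = S := Finset.eq_of_subset_of_card_le hps (by rw [hcard, h2 p hp])
  rwa [← this]

lemma eq_of_two_shared_aux {M M' : Finset (Finset (Fin 6))} {s t : Finset (Fin 6)}
    (hM : IsPerfectMatching M) (hM' : IsPerfectMatching M')
    (hs : s ∈ M ∩ M') (ht : t ∈ M ∩ M') (hst : s ≠ t) : M ⊆ M' := by
  obtain ⟨hc, h2, hd, hcov⟩ := hM
  obtain ⟨hc', h2', hd', hcov'⟩ := hM'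
  have hsM := (Finset.mem_inter.1 hs).1
  have hsM' := (Finset.mem_inter.1 hs).2
  have htM := (Finset.mem_inter.1 ht).1
  have htM' := (Finset.mem_inter.1 ht).2
  intro p hp
  by_cases hps : p = s
  · rwa [hps]
  by_cases hpt : p = t
  · rwa [hpt]
  have hdps := hd p hp s hsM hps
  have hdpt := hd p hp t htM hpt
  set R : Finset (Fin 6) := Finset.univ \ (s ∪ t) with hR
  have hcardR : R.card = 2 := by
    rw [hR, Finset.card_sdiff_of_subset (Finset.subset_univ _),
      Finset.card_union_of_disjoint (hd s hsM t htM hst), h2 s hsM, h2 t htM]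
    simp
  have hpR : p ⊆ R := by
    intro k hk
    simp only [hR, Finset.mem_sdiff, Finset.mem_univ, Finset.mem_union, true_and]
    push_neg
    exact ⟨Finset.disjoint_left.1 hdps hk, Finset.disjoint_left.1 hdpt hk⟩
  have hpeq : p = R := Finset.eq_of_subset_of_card_le hpR (by rw [hcardR, h2 p hp])
  obtain ⟨i, hi⟩ : p.Nonempty := Finset.card_pos.1 (by rw [h2 p hp]; omega)
  obtain ⟨q, hq, hiq⟩ := hcov' i
  have hqs : q ≠ s := by
    rintro rfl
    exact Finset.disjoint_left.1 hdps hi hiq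
  have hqt : q ≠ t := by
    rintro rfl
    exact Finset.disjoint_left.1 hdpt hi hiq
  have hdqs := hd' q hq s hsM' hqs
  have hdqt := hd' q hq t htM' hqt
  have hqR : q ⊆ R := by
    intro k hk
    simp only [hR, Finset.mem_sdiff, Finset.mem_univ, Finset.mem_union, true_and]
    push_neg
    exact ⟨Finset.disjoint_left.1 hdqs hk, Finset.disjoint_left.1 hdqt hk⟩
  have hqeq : q = R := Finset.eq_of_subset_of_card_le hqR (by rw [hcardR, h2' q hq])
  rw [hpeq, ← hqeq]
  exact hq

lemma eq_of_two_shared {M M' : Finset (Finset (Fin 6))} {s t : Finset (Fin 6)}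
    (hM : IsPerfectMatching M) (hM' : IsPerfectMatching M')
    (hs : s ∈ M ∩ M') (ht : t ∈ M ∩ M') (hst : s ≠ t) : M = M' := by
  refine Finset.eq_of_subset_of_card_le
    (eq_of_two_shared_aux hM hM' hs ht hst) ?_
  rw [hM.1, hM'.1]

lemma sat_of_line {M : Finset (Finset (Fin 6))} {z : Fin 6 → ℂ}
    (hz : ∀ p ∈ M, ∀ a ∈ p, ∀ b ∈ p, z a = z b) (j : Fin 6) :
    Sat M (Finset.univ.filter (fun k => z k = z j)) := by
  intro p hp i hip hiS b hbp
  simp only [Finset.mem_filter, Finset.mem_univ, true_and] at hiS ⊢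
  rw [← hiS]
  exact hz p hp b hbp i hip

lemma triple_mem_line {M : Finset (Finset (Fin 6))} {s : Finset (Fin 6)}
    (hM : IsPerfectMatching M) (hs : s ∈ M) (c : ℂ) :
    c • TriplePoint s ∈ LineOf M := by
  obtain ⟨hc, h2, hd, hcov⟩ := hM
  constructor
  · have hsum : ∑ i, TriplePoint s i = 0 := by
      rw [← Finset.sum_add_sum_compl s]
      have e1 : ∑ i ∈ s, TriplePoint s i = ∑ i ∈ s, (-2 : ℂ) :=
        Finset.sum_congr rfl (fun i hi => if_pos hi)
      have e2 : ∑ i ∈ sᶜ, TriplePoint s i = ∑ i ∈ sᶜ, (1 : ℂ) :=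
        Finset.sum_congr rfl (fun i hi => if_neg (Finset.mem_compl.1 hi))
      rw [e1, e2, Finset.sum_const, Finset.sum_const, Finset.card_compl, h2 s hs]
      norm_num
    simp only [Pi.smul_apply, smul_eq_mul, ← Finset.mul_sum, hsum, mul_zero]
  · intro p hp a ha b hb
    by_cases hps : p = s
    · subst hps
      simp only [Pi.smul_apply, smul_eq_mul, TriplePoint, if_pos ha, if_pos hb]
    · have hdps := hd p hp s hs hps
      have hais : a ∉ s := Finset.disjoint_left.1 hdps ha
      have hbis : b ∉ s := Finset.disjoint_left.1 hdps hb
      simp only [Pi.smul_apply, smul_eq_mul, TriplePoint, if_neg hais, if_neg hbis]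

end IgusaAux

/-- Two of the `15` singular lines of the Igusa quartic intersect trivially when the
corresponding matchings share no pair, and meet along the span of the triple point `P_{ij}`
when they share the pair `{i,j}`. -/
theorem igusa_lines_intersection (M M' : Finset (Finset (Fin 6)))
    (hM : IsPerfectMatching M) (hM' : IsPerfectMatching M') (hne : M ≠ M') :
    (M ∩ M' = ∅ → LineOf M ∩ LineOf M' = {0}) ∧
    (∀ s ∈ M ∩ M',
      LineOf M ∩ LineOf M' = {z | ∃ c : ℂ, z = c • TriplePoint s}) := by
  constructor
  · intro hMM'
    ext z
    simp only [Set.mem_inter_iff, Set.mem_singleton_iff]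
    constructor
    · rintro ⟨⟨hs1, hz1⟩, hs2, hz2⟩
      set S : Finset (Fin 6) := Finset.univ.filter (fun k => z k = z 0) with hSdef
      have satM : IgusaAux.Sat M S := IgusaAux.sat_of_line hz1 0
      have satM' : IgusaAux.Sat M' S := IgusaAux.sat_of_line hz2 0
      have h0 : (0 : Fin 6) ∈ S := by simp [hSdef]
      have hpos : 1 ≤ S.card := Finset.card_pos.2 ⟨0, h0⟩
      have hle : S.card ≤ 6 := by
        have := Finset.card_le_card (Finset.subset_univ S)
        simpa using this
      obtain ⟨m, hm⟩ := IgusaAux.sat_even hM satM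
      have hm13 : m = 1 ∨ m = 2 ∨ m = 3 := by omega
      have hnot2 : S.card ≠ 2 := by
        intro h2
        have : S ∈ M ∩ M' :=
          Finset.mem_inter.2 ⟨IgusaAux.sat_mem hM satM h2, IgusaAux.sat_mem hM' satM' h2⟩
        rw [hMM'] at this
        exact absurd this (Finset.notMem_empty S)
      have hnot4 : S.card ≠ 4 := by
        intro h4
        have hcc : Sᶜ.card = 2 := by
          rw [Finset.card_compl, h4]; rfl
        have : Sᶜ ∈ M ∩ M' :=
          Finset.mem_inter.2 ⟨IgusaAux.sat_mem hM (IgusaAux.sat_compl satM) hcc,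
            IgusaAux.sat_mem hM' (IgusaAux.sat_compl satM') hcc⟩
        rw [hMM'] at this
        exact absurd this (Finset.notMem_empty Sᶜ)
      have h6 : S.card = 6 := by omega
      have hSuniv : S = Finset.univ := Finset.eq_univ_of_card S (by rw [h6]; rfl)
      have hconst : ∀ k : Fin 6, z k = z 0 := by
        intro k
        have : k ∈ S := hSuniv ▸ Finset.mem_univ k
        simpa [hSdef] using this
      have hz0 : z 0 = 0 := by
        have : (∑ i, z i) = 6 * z 0 := by
          rw [Finset.sum_congr rfl (fun i _ => hconst i), Finset.sum_const]
          simp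
        rw [this] at hs1
        have h6ne : (6 : ℂ) ≠ 0 := by norm_num
        exact (mul_eq_zero.1 hs1).resolve_left h6ne
      funext k
      rw [hconst k, hz0]; rfl
    · rintro rfl
      refine ⟨⟨by simp, fun p _ a _ b _ => rfl⟩, by simp, fun p _ a _ b _ => rfl⟩
  · intro s hs
    have hsM := (Finset.mem_inter.1 hs).1
    have hsM' := (Finset.mem_inter.1 hs).2
    have huniq : ∀ t ∈ M ∩ M', t = s := by
      intro t ht
      by_contra hts
      exact hne (IgusaAux.eq_of_two_shared hM hM' ht hs hts)
    have hscard : s.card = 2 := hM.2.1 s hsM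
    ext z
    simp only [Set.mem_inter_iff, Set.mem_setOf_eq]
    constructor
    · rintro ⟨⟨hs1, hz1⟩, hs2, hz2⟩
      obtain ⟨j, hj⟩ : sᶜ.Nonempty := by
        apply Finset.card_pos.1
        rw [Finset.card_compl, hscard]
        norm_num
      have hjs : j ∉ s := Finset.mem_compl.1 hj
      set S : Finset (Fin 6) := Finset.univ.filter (fun k => z k = z j) with hSdef
      have satM : IgusaAux.Sat M S := IgusaAux.sat_of_line hz1 j
      have satM' : IgusaAux.Sat M' S := IgusaAux.sat_of_line hz2 j
      have hjS : j ∈ S := by simp [hSdef]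
      have hpos : 1 ≤ S.card := Finset.card_pos.2 ⟨j, hjS⟩
      have hle : S.card ≤ 6 := by
        have := Finset.card_le_card (Finset.subset_univ S)
        simpa using this
      obtain ⟨m, hm⟩ := IgusaAux.sat_even hM satM
      have hnot2 : S.card ≠ 2 := by
        intro h2
        have hmem : S ∈ M ∩ M' :=
          Finset.mem_inter.2 ⟨IgusaAux.sat_mem hM satM h2, IgusaAux.sat_mem hM' satM' h2⟩
        exact hjs (huniq S hmem ▸ hjS)
      have hcase : S.card = 4 ∨ S.card = 6 := by omega
      rcases hcase with h4 | h6
      · have hcc : Sᶜ.card = 2 := by rw [Finset.card_compl, h4]; rfl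
        have hmem : Sᶜ ∈ M ∩ M' :=
          Finset.mem_inter.2 ⟨IgusaAux.sat_mem hM (IgusaAux.sat_compl satM) hcc,
            IgusaAux.sat_mem hM' (IgusaAux.sat_compl satM') hcc⟩
        have hScs : Sᶜ = s := huniq Sᶜ hmem
        have hSc : S = sᶜ := by rw [← hScs, compl_compl]
        have houts : ∀ k, k ∉ s → z k = z j := by
          intro k hk
          have : k ∈ S := by rw [hSc]; exact Finset.mem_compl.2 hk
          simpa [hSdef] using this
        obtain ⟨a, ha⟩ : s.Nonempty := Finset.card_pos.1 (by omega)
        have hins : ∀ k ∈ s, z k = z a := fun k hk => hz1 s hsM k hk a ha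
        have hsum : (∑ i, z i) = 2 * z a + 4 * z j := by
          rw [← Finset.sum_add_sum_compl s]
          have e1 : ∑ i ∈ s, z i = ∑ i ∈ s, z a :=
            Finset.sum_congr rfl (fun i hi => hins i hi)
          have e2 : ∑ i ∈ sᶜ, z i = ∑ i ∈ sᶜ, z j :=
            Finset.sum_congr rfl (fun i hi => houts i (Finset.mem_compl.1 hi))
          rw [e1, e2, Finset.sum_const, Finset.sum_const, hscard,
            Finset.card_compl, hscard]
          norm_num
        rw [hsum] at hs1
        have hza : z a = -2 * z j := by linear_combination hs1 / 2
        refine ⟨z j, funext fun k => ?_⟩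
        simp only [Pi.smul_apply, smul_eq_mul, TriplePoint]
        by_cases hk : k ∈ s
        · rw [if_pos hk, hins k hk, hza]; ring
        · rw [if_neg hk, houts k hk]; ring
      · have hSuniv : S = Finset.univ := Finset.eq_univ_of_card S (by rw [h6]; rfl)
        have hconst : ∀ k : Fin 6, z k = z j := by
          intro k
          have : k ∈ S := hSuniv ▸ Finset.mem_univ k
          simpa [hSdef] using this
        have hzj : z j = 0 := by
          have : (∑ i, z i) = 6 * z j := by
            rw [Finset.sum_congr rfl (fun i _ => hconst i), Finset.sum_const]
            simp
          rw [this] at hs1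
          have h6ne : (6 : ℂ) ≠ 0 := by norm_num
          exact (mul_eq_zero.1 hs1).resolve_left h6ne
        refine ⟨0, funext fun k => ?_⟩
        simp [hconst k, hzj]
    · rintro ⟨c, rfl⟩
      exact ⟨IgusaAux.triple_mem_line hM hsM c, IgusaAux.triple_mem_line hM' hsM' c⟩
end

section
/- Let q ∈ ℂ[X_0,…,X_5] be homogeneous of degree 2 and suppose that q(z) = 0 for every z : Fin 6 → ℂ such that z_0+⋯+z_5 = 0 and z_a = z_b for every pair {a,b} of some perfect matching of Fin 6 (i.e. q vanishes on all 15 singular lines of the Igusa quartic). Then there exists a homogeneous linear form ℓ with q = (X_0+⋯+X_5)·ℓ; equivalently, no nonzero quadric of the hyperplane P^4 = {Σ z_i = 0} contains the singular locus of the Igusa quartic. -/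
open MvPolynomial

/-!
Put `g(i, j) = q(eᵢ - eⱼ)`. For distinct `a, b, c, d` the points `(eₐ - e_c) ± (e_b - e_d)` lie on
the singular lines of the matchings `{ab, cd, ef}` and `{ad, bc, ef}`, so the parallelogram law gives
`g(a, c) + g(b, d) = 0` whenever `{a, c}` and `{b, d}` are disjoint. Applied to the three pairs of a
perfect matching this forces `g = 0`. A quadratic form vanishing at every `eᵢ - eⱼ` has Gram matrix
`(q(eᵢ) + q(eⱼ)) / 2`, i.e. it is `(∑ zᵢ) (∑ q(eᵢ) zᵢ)`.
-/

lemma Finsupp.exists_eq_single_add_single_of_degree_eq_two {ι : Type*} {d : ι →₀ ℕ}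
    (hd : d.degree = 2) : ∃ a b, d = single a 1 + single b 1 := by
  classical
  obtain ⟨a, b, hab⟩ := Multiset.card_eq_two.mp ((Finsupp.card_toMultiset d).trans hd)
  refine ⟨a, b, ?_⟩
  rw [← Finsupp.toMultiset_toFinsupp d, hab, Multiset.insert_eq_cons, ← Multiset.singleton_add,
    Multiset.toFinsupp_add]
  simp

namespace MvPolynomial

section Quadric

variable {K ι : Type*} [Field K] [DecidableEq ι]

/-- For `q = ∑ bᵢⱼ XᵢXⱼ` with `b` symmetric, polarisation recovers `bᵢⱼ`. -/
noncomputable def gramEntry (q : MvPolynomial ι K) (i j : ι) : K :=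
  (eval (Pi.single i 1) q + eval (Pi.single j 1) q - eval (Pi.single i 1 - Pi.single j 1) q) / 2

lemma eval_X_mul_X_eq_sum_gramEntry [Fintype ι] [NeZero (2 : K)] (a b : ι) (z : ι → K) :
    eval z (X a * X b) = ∑ i, ∑ j, z i * z j * gramEntry (X a * X b : MvPolynomial ι K) i j := by
  have hz : ∀ c, ∑ i, z i * (Pi.single i (1 : K) : ι → K) c = z c := by
    intro c; simp [Pi.single_apply]
  have hgram : ∀ i j, z i * z j * gramEntry (X a * X b : MvPolynomial ι K) i j =
      (z i * (Pi.single i 1 : ι → K) a * (z j * (Pi.single j 1 : ι → K) b) +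
        z j * (Pi.single j 1 : ι → K) a * (z i * (Pi.single i 1 : ι → K) b)) / 2 := by
    intro i j
    simp only [gramEntry, eval_mul, eval_X, Pi.sub_apply]
    ring
  simp only [hgram, ← Finset.sum_div, Finset.sum_add_distrib, ← Finset.sum_mul_sum, hz]
  rw [Finset.sum_comm]
  simp only [← Finset.sum_mul_sum, hz, eval_mul, eval_X]
  field_simp
  ring

lemma gramEntry_add (p q : MvPolynomial ι K) (i j : ι) :
    gramEntry (p + q) i j = gramEntry p i j + gramEntry q i j := by
  simp only [gramEntry, map_add]
  ring

lemma gramEntry_C_mul (r : K) (q : MvPolynomial ι K) (i j : ι) :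
    gramEntry (C r * q) i j = r * gramEntry q i j := by
  simp only [gramEntry, eval_mul, eval_C]
  ring

lemma IsHomogeneous.eval_eq_sum_gramEntry [Fintype ι] [NeZero (2 : K)] {q : MvPolynomial ι K}
    (hq : q.IsHomogeneous 2) (z : ι → K) :
    eval z q = ∑ i, ∑ j, z i * z j * gramEntry q i j := by
  induction hq using IsWeightedHomogeneous.induction_on with
  | zero => simp [gramEntry]
  | add p q _ _ hp hq => simp only [map_add, gramEntry_add, mul_add, Finset.sum_add_distrib, hp, hq]
  | monomial d r hd =>
    rw [Pi.one_def, ← Finsupp.degree_eq_weight_one] at hd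
    obtain ⟨a, b, rfl⟩ := Finsupp.exists_eq_single_add_single_of_degree_eq_two hd
    rw [monomial_add_single, ← C_mul_X_pow_eq_monomial, pow_one, pow_one, mul_assoc]
    simp only [gramEntry_C_mul, eval_mul, eval_C, eval_X_mul_X_eq_sum_gramEntry a b z,
      Finset.mul_sum]
    ring_nf

lemma IsHomogeneous.eval_add_add_eval_sub [Fintype ι] [NeZero (2 : K)] {q : MvPolynomial ι K}
    (hq : q.IsHomogeneous 2) (x y : ι → K) :
    eval (x + y) q + eval (x - y) q = 2 * (eval x q + eval y q) := by
  simp only [hq.eval_eq_sum_gramEntry, Pi.add_apply, Pi.sub_apply, Finset.mul_sum,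
    ← Finset.sum_add_distrib]
  refine Finset.sum_congr rfl fun i _ => Finset.sum_congr rfl fun j _ => ?_
  ring

lemma IsHomogeneous.gramEntry_self [NeZero (2 : K)] {q : MvPolynomial ι K}
    (hq : q.IsHomogeneous 2) (i : ι) :
    gramEntry q i i = eval (Pi.single i 1) q := by
  have h0 : eval 0 q = 0 := by
    rw [eval_zero, constantCoeff_eq]
    exact hq.coeff_eq_zero (by simp)
  rw [gramEntry, sub_self, h0, sub_zero, add_self_div_two]

theorem IsHomogeneous.eq_sum_X_mul_of_eval_single_sub_single_eq_zero [Fintype ι] [NeZero (2 : K)]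
    [Infinite K] {q : MvPolynomial ι K} (hq : q.IsHomogeneous 2)
    (h : ∀ i j, i ≠ j → eval (Pi.single i 1 - Pi.single j 1) q = 0) :
    q = (∑ i, X i) * ∑ i, C (eval (Pi.single i 1) q) * X i := by
  set c : ι → K := fun i => eval (Pi.single i 1) q
  have hgram : ∀ i j, gramEntry q i j = (c i + c j) / 2 := by
    intro i j
    rcases eq_or_ne i j with rfl | hij
    · rw [hq.gramEntry_self, add_self_div_two]
    · rw [gramEntry, h i j hij, sub_zero]
  refine MvPolynomial.funext fun z => ?_
  have hsymm : ∑ i, ∑ j, z i * z j * c i = ∑ i, ∑ j, z i * z j * c j := by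
    rw [Finset.sum_comm]
    simp only [mul_comm (z _) (z _)]
  rw [hq.eval_eq_sum_gramEntry]
  simp only [hgram, eval_mul, map_sum, eval_C, eval_X, Finset.sum_mul_sum]
  calc ∑ i, ∑ j, z i * z j * ((c i + c j) / 2)
      = (∑ i, ∑ j, z i * z j * c i + ∑ i, ∑ j, z i * z j * c j) / 2 := by
        simp only [← Finset.sum_add_distrib, Finset.sum_div]
        refine Finset.sum_congr rfl fun i _ => Finset.sum_congr rfl fun j _ => ?_
        ring
    _ = ∑ i, ∑ j, z i * (c j * z j) := by
        rw [hsymm, ← two_mul, mul_div_cancel_left₀ _ two_ne_zero]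
        simp only [mul_assoc, mul_comm (z _) (c _)]

end Quadric
end MvPolynomial

def igusaSingularLocus : Set (Fin 6 → ℂ) :=
  {z | ∃ M, IsPerfectMatching M ∧ z ∈ LineOf M}

lemma IsPerfectMatching.map_perm {M : Finset (Finset (Fin 6))} (hM : IsPerfectMatching M)
    (σ : Equiv.Perm (Fin 6)) :
    IsPerfectMatching (M.map (Finset.mapEmbedding σ.toEmbedding).toEmbedding) := by
  obtain ⟨hcard, hpair, hdisj, hcover⟩ := hM
  refine ⟨by rw [Finset.card_map, hcard], ?_, ?_, fun i => ?_⟩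
  · simp only [Finset.mem_map, forall_exists_index, and_imp, forall_apply_eq_imp_iff₂]
    intro p hp
    simp [hpair p hp]
  · simp only [Finset.mem_map, forall_exists_index, and_imp, forall_apply_eq_imp_iff₂]
    intro p hp p' hp' hne
    simpa using hdisj p hp p' hp' fun h => hne (h ▸ rfl)
  · obtain ⟨p, hp, hi⟩ := hcover (σ.symm i)
    exact ⟨_, Finset.mem_map_of_mem _ hp, by simpa [Finset.mem_map_equiv] using hi⟩

lemma comp_symm_mem_lineOf_map_perm {M : Finset (Finset (Fin 6))} {z : Fin 6 → ℂ}
    (hz : z ∈ LineOf M) (σ : Equiv.Perm (Fin 6)) :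
    z ∘ σ.symm ∈ LineOf (M.map (Finset.mapEmbedding σ.toEmbedding).toEmbedding) := by
  obtain ⟨hsum, hconst⟩ := hz
  refine ⟨by rwa [Function.comp_def, Equiv.sum_comp], ?_⟩
  simp only [Finset.mem_map, forall_exists_index, and_imp, forall_apply_eq_imp_iff₂]
  intro p hp a ha b hb
  simp only [RelEmbedding.coe_toEmbedding, Finset.mapEmbedding_apply, Finset.mem_map_equiv] at ha hb
  exact hconst p hp _ ha _ hb

lemma comp_perm_mem_igusaSingularLocus {z : Fin 6 → ℂ} (hz : z ∈ igusaSingularLocus)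
    (σ : Equiv.Perm (Fin 6)) : z ∘ σ ∈ igusaSingularLocus := by
  obtain ⟨M, hM, hzM⟩ := hz
  exact ⟨_, hM.map_perm σ.symm, comp_symm_mem_lineOf_map_perm hzM σ.symm⟩

lemma isPerfectMatching_standard : IsPerfectMatching {{0, 1}, {2, 3}, {4, 5}} :=
  ⟨by decide, by simp, by simp [Finset.disjoint_left], by decide⟩

lemma single_add_single_sub_single_sub_single_mem_igusaSingularLocus (σ : Equiv.Perm (Fin 6)) :
    Pi.single (σ 0) 1 + Pi.single (σ 1) 1 - Pi.single (σ 2) 1 - Pi.single (σ 3) 1 ∈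
      igusaSingularLocus := by
  have hbase : Pi.single 0 1 + Pi.single 1 1 - Pi.single 2 1 - Pi.single 3 1 ∈
      igusaSingularLocus := by
    refine ⟨{{0, 1}, {2, 3}, {4, 5}}, isPerfectMatching_standard, by simp [Fin.sum_univ_six], ?_⟩
    intro p hp a ha b hb
    fin_cases hp <;> fin_cases ha <;> fin_cases hb <;> simp
  convert comp_perm_mem_igusaSingularLocus hbase σ.symm using 1
  simp only [Pi.add_comp, Pi.sub_comp, Pi.single_comp_equiv, Equiv.symm_symm]

section VanishingOnSingularLocus

variable {q : MvPolynomial (Fin 6) ℂ} (hq : q.IsHomogeneous 2)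
  (hvanish : ∀ z ∈ igusaSingularLocus, eval z q = 0)
include hq hvanish

lemma eval_single_sub_single_add_eval_single_sub_single (σ : Equiv.Perm (Fin 6)) :
    eval (Pi.single (σ 0) 1 - Pi.single (σ 2) 1) q +
      eval (Pi.single (σ 1) 1 - Pi.single (σ 3) 1) q = 0 := by
  set x : Fin 6 → ℂ := Pi.single (σ 0) 1 - Pi.single (σ 2) 1
  set y : Fin 6 → ℂ := Pi.single (σ 1) 1 - Pi.single (σ 3) 1
  obtain ⟨τ, hτ⟩ : ∃ τ : Equiv.Perm (Fin 6), τ 0 = 0 ∧ τ 1 = 3 ∧ τ 2 = 2 ∧ τ 3 = 1 :=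
    ⟨Equiv.swap 1 3, by decide⟩
  have hplus : eval (x + y) q = 0 := by
    convert hvanish _ (single_add_single_sub_single_sub_single_mem_igusaSingularLocus σ) using 3
    simp only [x, y]
    abel
  have hminus : eval (x - y) q = 0 := by
    convert hvanish _
      (single_add_single_sub_single_sub_single_mem_igusaSingularLocus (σ * τ)) using 3
    simp only [x, y, Equiv.Perm.mul_apply, hτ]
    abel
  have hpar := hq.eval_add_add_eval_sub x y
  rw [hplus, hminus, zero_add, eq_comm, mul_eq_zero] at hpar
  exact hpar.resolve_left two_ne_zero

lemma eval_single_sub_single_eq_zero {i j : Fin 6} (hij : i ≠ j) :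
    eval (Pi.single i 1 - Pi.single j 1) q = 0 := by
  obtain ⟨σ, rfl, rfl⟩ := MulAction.is_two_pretransitive_iff.mp
    (Equiv.Perm.isMultiplyPretransitive (Fin 6) 2) (show (0 : Fin 6) ≠ 2 by decide) hij
  obtain ⟨τ₁, hτ₁⟩ : ∃ τ : Equiv.Perm (Fin 6), τ 0 = 0 ∧ τ 1 = 4 ∧ τ 2 = 2 ∧ τ 3 = 5 :=
    ⟨Equiv.swap 1 4 * Equiv.swap 3 5, by decide⟩
  obtain ⟨τ₂, hτ₂⟩ : ∃ τ : Equiv.Perm (Fin 6), τ 0 = 1 ∧ τ 1 = 4 ∧ τ 2 = 3 ∧ τ 3 = 5 :=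
    ⟨Equiv.swap 0 1 * Equiv.swap 1 4 * (Equiv.swap 2 3 * Equiv.swap 3 5), by decide⟩
  -- with `g(a, b) = q(eₐ - e_b)`, these say that any two of `g(σ0, σ2)`, `g(σ1, σ3)`,
  -- `g(σ4, σ5)` add up to zero
  have h₁ := eval_single_sub_single_add_eval_single_sub_single hq hvanish σ
  have h₂ := eval_single_sub_single_add_eval_single_sub_single hq hvanish (σ * τ₁)
  have h₃ := eval_single_sub_single_add_eval_single_sub_single hq hvanish (σ * τ₂)
  simp only [Equiv.Perm.mul_apply, hτ₁, hτ₂] at h₂ h₃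
  have h : 2 * eval (Pi.single (σ • 0) 1 - Pi.single (σ • 2) 1) q = 0 := by
    linear_combination h₁ + h₂ - h₃
  exact (mul_eq_zero.mp h).resolve_left two_ne_zero

end VanishingOnSingularLocus

/-- No nonzero quadric of the hyperplane `{∑ zᵢ = 0}` contains the singular locus of the
Igusa quartic: a quadric vanishing on all `15` singular lines is divisible by `∑ Xᵢ`. -/
theorem no_quadric_contains_igusa_singular_locus (q : MvPolynomial (Fin 6) ℂ)
    (hq : q.IsHomogeneous 2)
    (hvanish : ∀ z : Fin 6 → ℂ,
      (∃ M : Finset (Finset (Fin 6)), IsPerfectMatching M ∧ z ∈ LineOf M) →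
      eval z q = 0) :
    ∃ ℓ : MvPolynomial (Fin 6) ℂ, ℓ.IsHomogeneous 1 ∧
      q = (∑ i : Fin 6, X i) * ℓ := by
  refine ⟨∑ i, C (eval (Pi.single i 1) q) * X i,
    IsHomogeneous.sum _ _ 1 fun i _ => isHomogeneous_C_mul_X _ i, ?_⟩
  exact hq.eq_sum_X_mul_of_eval_single_sub_single_eq_zero fun i j hij =>
    eval_single_sub_single_eq_zero hq hvanish hij
end

section
/- In the Schläfli configuration of 27 lines, any set of pairwise non-meeting lines has at most 6 elements; in particular the configuration does not contain 12 pairwise disjoint lines. -/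
/-- The 27 lines of a smooth cubic surface: `E i`, `G i` and `F s`. -/
abbrev SchlafliLine := Fin 6 ⊕ Fin 6 ⊕ {s : Finset (Fin 6) // s.card = 2}

/-- The incidence relation of the configuration of the 27 lines:
`E i` meets `G j` iff `i ≠ j`; `E i` (resp. `G i`) meets `F s` iff `i ∈ s`;
`F s` meets `F t` iff `s` and `t` are disjoint; two distinct `E`'s (resp. `G`'s)
never meet. -/
def Meets : SchlafliLine → SchlafliLine → Prop
  | Sum.inl _, Sum.inl _ => False
  | Sum.inl i, Sum.inr (Sum.inl j) => i ≠ j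
  | Sum.inl i, Sum.inr (Sum.inr s) => i ∈ s.1
  | Sum.inr (Sum.inl i), Sum.inl j => i ≠ j
  | Sum.inr (Sum.inl _), Sum.inr (Sum.inl _) => False
  | Sum.inr (Sum.inl i), Sum.inr (Sum.inr s) => i ∈ s.1
  | Sum.inr (Sum.inr s), Sum.inl i => i ∈ s.1
  | Sum.inr (Sum.inr s), Sum.inr (Sum.inl i) => i ∈ s.1
  | Sum.inr (Sum.inr s), Sum.inr (Sum.inr t) => Disjoint s.1 t.1

namespace SchlafliAux

abbrev Pair := {s : Finset (Fin 6) // s.card = 2}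

/-- The points not covered by any pair of the family. -/
def uncov (𝒮 : Finset Pair) : Finset (Fin 6) :=
  Finset.univ.filter fun i => ∀ s ∈ 𝒮, i ∉ s.1

lemma uncov_card_le (𝒮 : Finset Pair) : (uncov 𝒮).card ≤ 6 :=
  le_trans (Finset.card_filter_le _ _) (by simp)

lemma pair_eq {v : Pair} {p q : Fin 6} (hp : p ∈ v.1) (hq : q ∈ v.1) (hpq : p ≠ q) :
    v.1 = {p, q} := by
  refine (Finset.eq_of_subset_of_card_le ?_ ?_).symm
  · intro y hy
    rcases Finset.mem_insert.mp hy with rfl | hy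
    · exact hp
    · rw [Finset.mem_singleton] at hy; subst hy; exact hq
  · rw [v.2, Finset.card_pair hpq]

lemma onecover {𝒮 : Finset Pair} {s : Pair} (hs : s ∈ 𝒮) : (uncov 𝒮).card ≤ 4 := by
  have hsub : uncov 𝒮 ⊆ Finset.univ \ s.1 := by
    intro i hi
    simp only [uncov, Finset.mem_filter] at hi
    simp [hi.2 s hs]
  have h := Finset.card_le_card hsub
  rw [Finset.card_sdiff_of_subset (Finset.subset_univ _)] at h
  have h6 : (Finset.univ : Finset (Fin 6)).card = 6 := by simp
  have h2 := s.2
  omega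

lemma twocover {𝒮 : Finset Pair} {s t : Pair} (hs : s ∈ 𝒮) (ht : t ∈ 𝒮) (hst : s ≠ t) :
    (uncov 𝒮).card ≤ 3 := by
  have hsub : uncov 𝒮 ⊆ Finset.univ \ (s.1 ∪ t.1) := by
    intro i hi
    simp only [uncov, Finset.mem_filter] at hi
    simp [hi.2 s hs, hi.2 t ht]
  have hinter : (s.1 ∩ t.1).card ≤ 1 := by
    by_contra hc
    push_neg at hc
    have h1 : s.1 ∩ t.1 = s.1 :=
      Finset.eq_of_subset_of_card_le Finset.inter_subset_left (by rw [s.2]; omega)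
    have h2 : s.1 ⊆ t.1 := by rw [← h1]; exact Finset.inter_subset_right
    have h3 : s.1 = t.1 := Finset.eq_of_subset_of_card_le h2 (by rw [s.2, t.2])
    exact hst (Subtype.ext h3)
  have hun : 3 ≤ (s.1 ∪ t.1).card := by
    have h := Finset.card_union_add_card_inter s.1 t.1
    rw [s.2, t.2] at h; omega
  have h := Finset.card_le_card hsub
  rw [Finset.card_sdiff_of_subset (Finset.subset_univ _)] at h
  have h6 : (Finset.univ : Finset (Fin 6)).card = 6 := by simp
  omega

lemma starbound {𝒮 : Finset Pair} {x : Fin 6} (hx : ∀ s ∈ 𝒮, x ∈ s.1) (hne : 𝒮.Nonempty) :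
    𝒮.card + (uncov 𝒮).card ≤ 5 := by
  classical
  have hxU : x ∉ uncov 𝒮 := by
    obtain ⟨s, hs⟩ := hne
    simp only [uncov, Finset.mem_filter, Finset.mem_univ, true_and, not_forall]
    exact ⟨s, hs, by simp [hx s hs]⟩
  set f : Pair → Fin 6 :=
    fun s => if h : (s.1.erase x).Nonempty then (s.1.erase x).min' h else 0 with hf
  have hkey : ∀ s ∈ 𝒮, s.1 = insert x {f s} ∧ f s ∈ s.1.erase x := by
    intro s hs
    have hcard : (s.1.erase x).card = 1 := by
      rw [Finset.card_erase_of_mem (hx s hs), s.2]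
    have hne' : (s.1.erase x).Nonempty := Finset.card_pos.mp (by omega)
    have hmem : f s ∈ s.1.erase x := by
      rw [hf]; simp only [dif_pos hne']; exact Finset.min'_mem _ hne'
    have hsing : s.1.erase x = {f s} := by
      obtain ⟨y, hy⟩ := Finset.card_eq_one.mp hcard
      rw [hy] at hmem ⊢
      rw [Finset.mem_singleton] at hmem
      rw [hmem]
    refine ⟨?_, hmem⟩
    rw [← hsing, Finset.insert_erase (hx s hs)]
  have hmap : ∀ s ∈ 𝒮, f s ∈ Finset.univ \ insert x (uncov 𝒮) := by
    intro s hs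
    obtain ⟨h1, h2⟩ := hkey s hs
    have hfx : f s ≠ x := (Finset.mem_erase.mp h2).1
    have hfs : f s ∈ s.1 := (Finset.mem_erase.mp h2).2
    have hfU : f s ∉ uncov 𝒮 := by
      simp only [uncov, Finset.mem_filter, Finset.mem_univ, true_and, not_forall]
      exact ⟨s, hs, by simp [hfs]⟩
    simp only [Finset.mem_sdiff, Finset.mem_univ, true_and, Finset.mem_insert]
    tauto
  have hinj : Set.InjOn f 𝒮 := by
    intro s hs t ht heq
    apply Subtype.ext
    rw [(hkey s hs).1, (hkey t ht).1, heq]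
  have hle := Finset.card_le_card_of_injOn f hmap hinj
  rw [Finset.card_sdiff_of_subset (Finset.subset_univ _),
    Finset.card_insert_of_notMem hxU] at hle
  have h6 : (Finset.univ : Finset (Fin 6)).card = 6 := by simp
  have hU6 : (insert x (uncov 𝒮)).card ≤ 6 := le_trans (Finset.card_le_univ _) (by simp)
  rw [Finset.card_insert_of_notMem hxU] at hU6
  omega

lemma trichotomy {𝒮 : Finset Pair}
    (h : ∀ s ∈ 𝒮, ∀ t ∈ 𝒮, s ≠ t → ¬ Disjoint s.1 t.1) :
    (∃ x, ∀ s ∈ 𝒮, x ∈ s.1) ∨ 𝒮.card ≤ 3 := by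
  classical
  rcases 𝒮.eq_empty_or_nonempty with rfl | ⟨s, hs⟩
  · right; simp
  obtain ⟨a, b, hab, hsab⟩ := Finset.card_eq_two.mp s.2
  by_cases ha : ∀ t ∈ 𝒮, a ∈ t.1
  · exact Or.inl ⟨a, ha⟩
  push_neg at ha
  obtain ⟨t, ht, hat⟩ := ha
  have hst : s ≠ t := by rintro rfl; exact hat (by rw [hsab]; simp)
  have hbt : b ∈ t.1 := by
    obtain ⟨x, hx1, hx2⟩ := Finset.not_disjoint_iff.mp (h s hs t ht hst)
    rw [hsab] at hx1
    rcases Finset.mem_insert.mp hx1 with rfl | hx1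
    · exact absurd hx2 hat
    · rw [Finset.mem_singleton] at hx1; subst hx1; exact hx2
  obtain ⟨c, hca, hcb, htbc⟩ : ∃ c, c ≠ a ∧ c ≠ b ∧ t.1 = {b, c} := by
    obtain ⟨p, q, hpq, htpq⟩ := Finset.card_eq_two.mp t.2
    rw [htpq] at hbt hat
    simp only [Finset.mem_insert, Finset.mem_singleton] at hbt hat
    push_neg at hat
    rcases hbt with rfl | rfl
    · exact ⟨q, fun e => hat.2 e.symm, hpq.symm, htpq⟩
    · exact ⟨p, fun e => hat.1 e.symm, hpq, by rw [htpq, Finset.pair_comm]⟩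
  by_cases hb : ∀ u ∈ 𝒮, b ∈ u.1
  · exact Or.inl ⟨b, hb⟩
  push_neg at hb
  obtain ⟨u, hu, hbu⟩ := hb
  have hsu : s ≠ u := by rintro rfl; exact hbu (by rw [hsab]; simp)
  have htu : t ≠ u := by rintro rfl; exact hbu (by rw [htbc]; simp)
  have hau : a ∈ u.1 := by
    obtain ⟨x, hx1, hx2⟩ := Finset.not_disjoint_iff.mp (h s hs u hu hsu)
    rw [hsab] at hx1
    rcases Finset.mem_insert.mp hx1 with rfl | hx1
    · exact hx2
    · rw [Finset.mem_singleton] at hx1; subst hx1; exact absurd hx2 hbu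
  have hcu : c ∈ u.1 := by
    obtain ⟨x, hx1, hx2⟩ := Finset.not_disjoint_iff.mp (h t ht u hu htu)
    rw [htbc] at hx1
    rcases Finset.mem_insert.mp hx1 with rfl | hx1
    · exact absurd hx2 hbu
    · rw [Finset.mem_singleton] at hx1; subst hx1; exact hx2
  have huac : u.1 = {a, c} := pair_eq hau hcu (fun e => hca e.symm)
  right
  have hsub : 𝒮 ⊆ {s, t, u} := by
    intro v hv
    simp only [Finset.mem_insert, Finset.mem_singleton]
    by_cases hvs : v = s
    · exact Or.inl hvs
    by_cases hvt : v = t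
    · exact Or.inr (Or.inl hvt)
    by_cases hvu : v = u
    · exact Or.inr (Or.inr hvu)
    have m1 : a ∈ v.1 ∨ b ∈ v.1 := by
      obtain ⟨x, hx1, hx2⟩ := Finset.not_disjoint_iff.mp (h v hv s hs hvs)
      rw [hsab] at hx2
      rcases Finset.mem_insert.mp hx2 with rfl | hx2
      · exact Or.inl hx1
      · rw [Finset.mem_singleton] at hx2; subst hx2; exact Or.inr hx1
    have m2 : b ∈ v.1 ∨ c ∈ v.1 := by
      obtain ⟨x, hx1, hx2⟩ := Finset.not_disjoint_iff.mp (h v hv t ht hvt)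
      rw [htbc] at hx2
      rcases Finset.mem_insert.mp hx2 with rfl | hx2
      · exact Or.inl hx1
      · rw [Finset.mem_singleton] at hx2; subst hx2; exact Or.inr hx1
    have m3 : a ∈ v.1 ∨ c ∈ v.1 := by
      obtain ⟨x, hx1, hx2⟩ := Finset.not_disjoint_iff.mp (h v hv u hu hvu)
      rw [huac] at hx2
      rcases Finset.mem_insert.mp hx2 with rfl | hx2
      · exact Or.inl hx1
      · rw [Finset.mem_singleton] at hx2; subst hx2; exact Or.inr hx1
    rcases m1 with hva | hvb
    · rcases m2 with hvb | hvc
      · exact Or.inl (Subtype.ext ((pair_eq hva hvb hab).trans hsab.symm))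
      · exact Or.inr (Or.inr (Subtype.ext
          ((pair_eq hva hvc (fun e => hca e.symm)).trans huac.symm)))
    · rcases m3 with hva | hvc
      · exact Or.inl (Subtype.ext ((pair_eq hva hvb hab).trans hsab.symm))
      · exact Or.inr (Or.inl (Subtype.ext
          ((pair_eq hvb hvc (fun e => hcb e.symm)).trans htbc.symm)))
  calc 𝒮.card ≤ ({s, t, u} : Finset Pair).card := Finset.card_le_card hsub
    _ ≤ 3 := by
        have h1 := Finset.card_insert_le s ({t, u} : Finset Pair)
        have h2 := Finset.card_insert_le t ({u} : Finset Pair)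
        have h3 : ({u} : Finset Pair).card = 1 := Finset.card_singleton u
        omega

lemma key1 {𝒮 : Finset Pair}
    (h : ∀ s ∈ 𝒮, ∀ t ∈ 𝒮, s ≠ t → ¬ Disjoint s.1 t.1) :
    𝒮.card + (uncov 𝒮).card ≤ 6 := by
  rcases 𝒮.eq_empty_or_nonempty with rfl | hne
  · simpa using uncov_card_le ∅
  rcases trichotomy h with ⟨x, hx⟩ | h3
  · exact le_trans (starbound hx hne) (by norm_num)
  · rcases Nat.lt_or_ge 𝒮.card 2 with h2 | h2
    · obtain ⟨s, hs⟩ := hne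
      have := onecover hs
      omega
    · obtain ⟨s, hs, t, ht, hst⟩ := Finset.one_lt_card.mp h2
      have := twocover hs ht hst
      omega

lemma key2 {𝒮 : Finset Pair}
    (h : ∀ s ∈ 𝒮, ∀ t ∈ 𝒮, s ≠ t → ¬ Disjoint s.1 t.1)
    {i : Fin 6} (hi : ∀ s ∈ 𝒮, i ∉ s.1) : 𝒮.card ≤ 4 := by
  rcases 𝒮.eq_empty_or_nonempty with rfl | hne
  · simp
  rcases trichotomy h with ⟨x, hx⟩ | h3
  · have h5 := starbound hx hne
    have hiU : i ∈ uncov 𝒮 := by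
      simp only [uncov, Finset.mem_filter, Finset.mem_univ, true_and]
      exact hi
    have h1 : 1 ≤ (uncov 𝒮).card := Finset.card_pos.mpr ⟨i, hiU⟩
    omega
  · omega

end SchlafliAux

open SchlafliAux in
/-- Any set of pairwise non-meeting lines of the Schläfli configuration has at most 6
elements; in particular there is no set of 12 pairwise disjoint lines. -/
theorem schlafli_at_most_six_disjoint :
    (∀ S : Set SchlafliLine,
      (∀ a ∈ S, ∀ b ∈ S, a ≠ b → ¬ Meets a b) → S.ncard ≤ 6) ∧
    ¬ ∃ S : Set SchlafliLine, S.ncard = 12 ∧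
        ∀ a ∈ S, ∀ b ∈ S, a ≠ b → ¬ Meets a b := by
  classical
  have main : ∀ S : Set SchlafliLine,
      (∀ a ∈ S, ∀ b ∈ S, a ≠ b → ¬ Meets a b) → S.ncard ≤ 6 := by
    intro S h
    set A : Finset (Fin 6) :=
      Finset.univ.filter (fun i => (Sum.inl i : SchlafliLine) ∈ S) with hAdef
    set B : Finset (Fin 6) :=
      Finset.univ.filter (fun i => (Sum.inr (Sum.inl i) : SchlafliLine) ∈ S) with hBdef
    set 𝒮 : Finset Pair :=
      Finset.univ.filter (fun s => (Sum.inr (Sum.inr s) : SchlafliLine) ∈ S) with h𝒮def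
    have hmemA : ∀ i, i ∈ A ↔ (Sum.inl i : SchlafliLine) ∈ S := by
      intro i; simp [hAdef]
    have hmemB : ∀ i, i ∈ B ↔ (Sum.inr (Sum.inl i) : SchlafliLine) ∈ S := by
      intro i; simp [hBdef]
    have hmem𝒮 : ∀ s, s ∈ 𝒮 ↔ (Sum.inr (Sum.inr s) : SchlafliLine) ∈ S := by
      intro s; simp [h𝒮def]
    have hpair : ∀ s ∈ 𝒮, ∀ t ∈ 𝒮, s ≠ t → ¬ Disjoint s.1 t.1 := by
      intro s hs t ht hst
      exact h _ ((hmem𝒮 s).mp hs) _ ((hmem𝒮 t).mp ht)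
        (by simp only [ne_eq, Sum.inr.injEq]; exact hst)
    have hST : S = ↑(A.image Sum.inl ∪ B.image (fun i => Sum.inr (Sum.inl i)) ∪
        𝒮.image (fun s => Sum.inr (Sum.inr s)) : Finset SchlafliLine) := by
      ext x
      rcases x with i | i | s <;>
        simp [hAdef, hBdef, h𝒮def]
    have hcard : S.ncard = A.card + B.card + 𝒮.card := by
      rw [hST, Set.ncard_coe_finset]
      rw [Finset.card_union_of_disjoint, Finset.card_union_of_disjoint]
      · rw [Finset.card_image_of_injective _ Sum.inl_injective,
          Finset.card_image_of_injective _ (fun a b hab => by simpa using hab),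
          Finset.card_image_of_injective _ (fun a b hab => by simpa using hab)]
      · simp [Finset.disjoint_left]
      · simp [Finset.disjoint_left]
    rw [hcard]
    by_cases hAne : A.Nonempty
    · by_cases hBne : B.Nonempty
      · obtain ⟨i, hi⟩ := hAne
        obtain ⟨j, hj⟩ := hBne
        have hA1 : A ⊆ {j} := by
          intro i' hi'
          rw [Finset.mem_singleton]
          by_contra hne
          exact h _ ((hmemA i').mp hi') _ ((hmemB j).mp hj) (by simp) hne
        have hB1 : B ⊆ {i} := by
          intro j' hj'
          rw [Finset.mem_singleton]
          by_contra hne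
          exact h _ ((hmemA i).mp hi) _ ((hmemB j').mp hj') (by simp)
            (fun e => hne e.symm)
        have hiS : ∀ s ∈ 𝒮, i ∉ s.1 := by
          intro s hs
          exact h _ ((hmemA i).mp hi) _ ((hmem𝒮 s).mp hs) (by simp)
        have h4 := key2 hpair hiS
        have hc1 := Finset.card_le_card hA1
        have hc2 := Finset.card_le_card hB1
        rw [Finset.card_singleton] at hc1 hc2
        omega
      · have hB0 : B.card = 0 := by
          rw [Finset.not_nonempty_iff_eq_empty.mp hBne]; rfl
        have hAU : A ⊆ uncov 𝒮 := by
          intro i hi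
          simp only [uncov, Finset.mem_filter, Finset.mem_univ, true_and]
          intro s hs
          exact h _ ((hmemA i).mp hi) _ ((hmem𝒮 s).mp hs) (by simp)
        have hc := Finset.card_le_card hAU
        have hk := key1 hpair
        omega
    · have hA0 : A.card = 0 := by
        rw [Finset.not_nonempty_iff_eq_empty.mp hAne]; rfl
      have hBU : B ⊆ uncov 𝒮 := by
        intro i hi
        simp only [uncov, Finset.mem_filter, Finset.mem_univ, true_and]
        intro s hs
        exact h _ ((hmemB i).mp hi) _ ((hmem𝒮 s).mp hs) (by simp)
      have hc := Finset.card_le_card hBU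
      have hk := key1 hpair
      omega
  refine ⟨main, ?_⟩
  rintro ⟨S, h12, hS⟩
  have := main S hS
  omega
end
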